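/- Let U ⊆ ℂ be open and simply connected, and let X ⊆ U be compact with ℂ \ X connected. Then U \ X is connected. -/

import Mathlib

open Set Finset

private lemma z2_add_self (a : ZMod 2) : a + a = 0 := by revert a; decide

private lemma z2_tel (h : ℕ → ZMod 2) : ∀ n : ℕ,
    (∑ i ∈ Finset.range n, (h i + h (i + 1))) = h 0 + h n := by
  intro n
  induction n with
  | zero => simp [(z2_add_self (h 0)).symm]
  | succ n ih =>
    rw [Finset.sum_range_succ, ih]
    have : ∀ a b c : ZMod 2, a + b + (b + c) = a + c := by decide
    exact this _ _ _

private lemma z2_telIco (h : ℕ → ZMod 2) (m n : ℕ) (hmn : m ≤ n) :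
    (∑ i ∈ Finset.Ico m n, (h i + h (i + 1))) = h m + h n := by
  rw [Finset.sum_Ico_eq_sum_range]
  have := z2_tel (fun i => h (m + i)) (n - m)
  calc (∑ i ∈ Finset.range (n - m), (h (m + i) + h (m + i + 1)))
      = h (m + 0) + h (m + (n - m)) := this
    _ = h m + h n := by rw [Nat.add_zero, Nat.add_sub_cancel' hmn]

/-- ℤ/2-valued indicator of `Q`. -/
private noncomputable def eps2 (Q : Set ℂ) (z : ℂ) : ZMod 2 :=
  open scoped Classical in if z ∈ Q then 1 else 0

private lemma eps2_of_mem {Q : Set ℂ} {z : ℂ} (h : z ∈ Q) : eps2 Q z = 1 := by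
  simp [eps2, h]

private lemma eps2_of_not_mem {Q : Set ℂ} {z : ℂ} (h : z ∉ Q) : eps2 Q z = 0 := by
  simp [eps2, h]

/-- vertex `(i,j)` of the `n × n` grid on `[0,1]²`, mapped by `G`. -/
private noncomputable def vtx (G : ℝ → ℝ → ℂ) (n i j : ℕ) : ℂ :=
  G ((i : ℝ) / n) ((j : ℝ) / n)

/-- weight of the horizontal edge from `(i,j)` to `(i+1,j)` colored by `c`. -/
private noncomputable def dH (Q : Set ℂ) (G : ℝ → ℝ → ℂ) (n i j : ℕ) (c : Bool) : ZMod 2 :=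
  if c then eps2 Q (vtx G n i j) + eps2 Q (vtx G n (i + 1) j) else 0

/-- weight of the vertical edge from `(i,j)` to `(i,j+1)` colored by `c`. -/
private noncomputable def dV (Q : Set ℂ) (G : ℝ → ℝ → ℂ) (n i j : ℕ) (c : Bool) : ZMod 2 :=
  if c then eps2 Q (vtx G n i j) + eps2 Q (vtx G n i (j + 1)) else 0

/-- the image of square `(i,j)` of the `n × n` grid on `[0,1]²` under `G` lies in `c`. -/
private def SqIn (G : ℝ → ℝ → ℂ) (n i j : ℕ) (c : Set ℂ) : Prop :=
  ∀ x : ℝ, (i : ℝ) / n ≤ x → x ≤ ((i : ℝ) + 1) / n →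
    ∀ y : ℝ, (j : ℝ) / n ≤ y → y ≤ ((j : ℝ) + 1) / n → G x y ∈ c

/-- the image of the horizontal edge from `(i,j)` to `(i+1,j)` lies in `c`. -/
private def HEdgeIn (G : ℝ → ℝ → ℂ) (n i j : ℕ) (c : Set ℂ) : Prop :=
  ∀ x : ℝ, (i : ℝ) / n ≤ x → x ≤ ((i : ℝ) + 1) / n → G x ((j : ℝ) / n) ∈ c

/-- the image of the vertical edge from `(i,j)` to `(i,j+1)` lies in `c`. -/
private def VEdgeIn (G : ℝ → ℝ → ℂ) (n i j : ℕ) (c : Set ℂ) : Prop :=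
  ∀ y : ℝ, (j : ℝ) / n ≤ y → y ≤ ((j : ℝ) + 1) / n → G ((i : ℝ) / n) y ∈ c

private lemma grid_false
    (A B P Q : Set ℂ)
    (hP : IsOpen P) (hQ : IsOpen Q)
    (hPQ : A ∩ B = P ∪ Q)
    (hdisj : ∀ z, z ∈ P → z ∈ Q → False)
    (p q : ℂ) (hpP : p ∈ P) (hqQ : q ∈ Q)
    (n m : ℕ) (hm : 0 < m) (hnm : n = 2 * m)
    (G : ℝ → ℝ → ℂ)
    (hGc : Continuous fun v : ℝ × ℝ => G v.1 v.2)
    (hleft : ∀ y ∈ Set.Icc (0:ℝ) 1, G 0 y = p)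
    (hright : ∀ y ∈ Set.Icc (0:ℝ) 1, G 1 y = p)
    (htop : ∀ x ∈ Set.Icc (0:ℝ) 1, G x 1 = p)
    (hbotA : ∀ x ∈ Set.Icc (0:ℝ) (1/2), G x 0 ∈ A)
    (hbotB : ∀ x ∈ Set.Icc (1/2:ℝ) 1, G x 0 ∈ B)
    (hmid : G (1/2) 0 = q)
    (hLeb : ∀ i j : ℕ, i < n → j < n → SqIn G n i j A ∨ SqIn G n i j B) :
    False := by
  classical
  have hn : 0 < n := by omega
  have hnR : (0:ℝ) < n := by exact_mod_cast hn
  have hnne : (n:ℝ) ≠ 0 := ne_of_gt hnR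
  have hep : eps2 Q p = 0 := eps2_of_not_mem (fun h => hdisj p hpP h)
  have heq : eps2 Q q = 1 := eps2_of_mem hqQ
  -- eps2 is constant on preconnected subsets of A ∩ B
  have epsconst : ∀ S : Set ℂ, IsPreconnected S → S ⊆ A → S ⊆ B →
      ∀ z ∈ S, ∀ w ∈ S, eps2 Q z = eps2 Q w := by
    intro S hS hSA hSB z hz w hw
    have hsub : S ⊆ P ∪ Q := by rw [← hPQ]; exact Set.subset_inter hSA hSB
    have hdisj' : Disjoint P Q := Set.disjoint_left.mpr (fun a ha hb => hdisj a ha hb)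
    rcases hS.subset_or_subset hP hQ hdisj' hsub with h | h
    · rw [eps2_of_not_mem (fun hzQ => hdisj z (h hz) hzQ),
        eps2_of_not_mem (fun hwQ => hdisj w (h hw) hwQ)]
    · rw [eps2_of_mem (h hz), eps2_of_mem (h hw)]
  have hstep : ∀ i : ℕ, (i:ℝ)/n ≤ ((i:ℝ)+1)/n := by
    intro i
    exact div_le_div_of_nonneg_right (by linarith) hnR.le
  have hcast : ∀ k : ℕ, ((k+1:ℕ):ℝ) = (k:ℝ)+1 := by intro k; push_cast; ring
  -- eps2 agrees at the two endpoints of an edge lying in A ∩ B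
  have hepsH : ∀ i j : ℕ, HEdgeIn G n i j A → HEdgeIn G n i j B →
      eps2 Q (vtx G n i j) = eps2 Q (vtx G n (i+1) j) := by
    intro i j hA' hB'
    have hc : ContinuousOn (fun x : ℝ => G x ((j:ℝ)/n)) (Set.Icc ((i:ℝ)/n) (((i:ℝ)+1)/n)) :=
      (hGc.comp (continuous_id.prodMk continuous_const)).continuousOn
    have hpre : IsPreconnected ((fun x : ℝ => G x ((j:ℝ)/n)) '' Set.Icc ((i:ℝ)/n) (((i:ℝ)+1)/n)) :=
      (isPreconnected_Icc).image _ hc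
    have hSA : ((fun x : ℝ => G x ((j:ℝ)/n)) '' Set.Icc ((i:ℝ)/n) (((i:ℝ)+1)/n)) ⊆ A := by
      rintro _ ⟨x, hx, rfl⟩; exact hA' x hx.1 hx.2
    have hSB : ((fun x : ℝ => G x ((j:ℝ)/n)) '' Set.Icc ((i:ℝ)/n) (((i:ℝ)+1)/n)) ⊆ B := by
      rintro _ ⟨x, hx, rfl⟩; exact hB' x hx.1 hx.2
    apply epsconst _ hpre hSA hSB
    · exact ⟨(i:ℝ)/n, ⟨le_refl _, hstep i⟩, rfl⟩
    · refine ⟨((i:ℝ)+1)/n, ⟨hstep i, le_refl _⟩, ?_⟩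
      simp only [vtx, hcast i]
  have hepsV : ∀ i j : ℕ, VEdgeIn G n i j A → VEdgeIn G n i j B →
      eps2 Q (vtx G n i j) = eps2 Q (vtx G n i (j+1)) := by
    intro i j hA' hB'
    have hc : ContinuousOn (fun y : ℝ => G ((i:ℝ)/n) y) (Set.Icc ((j:ℝ)/n) (((j:ℝ)+1)/n)) :=
      (hGc.comp (continuous_const.prodMk continuous_id)).continuousOn
    have hpre : IsPreconnected ((fun y : ℝ => G ((i:ℝ)/n) y) '' Set.Icc ((j:ℝ)/n) (((j:ℝ)+1)/n)) :=
      (isPreconnected_Icc).image _ hc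
    have hSA : ((fun y : ℝ => G ((i:ℝ)/n) y) '' Set.Icc ((j:ℝ)/n) (((j:ℝ)+1)/n)) ⊆ A := by
      rintro _ ⟨y, hy, rfl⟩; exact hA' y hy.1 hy.2
    have hSB : ((fun y : ℝ => G ((i:ℝ)/n) y) '' Set.Icc ((j:ℝ)/n) (((j:ℝ)+1)/n)) ⊆ B := by
      rintro _ ⟨y, hy, rfl⟩; exact hB' y hy.1 hy.2
    apply epsconst _ hpre hSA hSB
    · exact ⟨(j:ℝ)/n, ⟨le_refl _, hstep j⟩, rfl⟩
    · refine ⟨((j:ℝ)+1)/n, ⟨hstep j, le_refl _⟩, ?_⟩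
      simp only [vtx, hcast j]
  -- edges lying in A ∩ B have weight 0 for either color
  have dh0 : ∀ i j, HEdgeIn G n i j A → HEdgeIn G n i j B → ∀ c, dH Q G n i j c = 0 := by
    intro i j hA' hB' c
    cases c
    · simp [dH]
    · simp only [dH, if_true]
      rw [hepsH i j hA' hB']
      exact z2_add_self _
  have dv0 : ∀ i j, VEdgeIn G n i j A → VEdgeIn G n i j B → ∀ c, dV Q G n i j c = 0 := by
    intro i j hA' hB' c
    cases c
    · simp [dV]
    · simp only [dV, if_true]
      rw [hepsV i j hA' hB']
      exact z2_add_self _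
  -- choice of colors for the squares
  have hcol' : ∀ i j : ℕ, ∃ c : Bool,
      (i < n → j < n → ((c = false → SqIn G n i j A) ∧ (c = true → SqIn G n i j B))) := by
    intro i j
    by_cases hij : i < n ∧ j < n
    · rcases hLeb i j hij.1 hij.2 with h | h
      · exact ⟨false, fun _ _ => ⟨fun _ => h, fun hc => by simp at hc⟩⟩
      · exact ⟨true, fun _ _ => ⟨fun hc => by simp at hc, fun _ => h⟩⟩
    · exact ⟨false, fun h1 h2 => absurd ⟨h1, h2⟩ hij⟩
  choose col hcol using hcol'
  have SqA : ∀ i j, i < n → j < n → col i j = false → SqIn G n i j A :=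
    fun i j hi hj => (hcol i j hi hj).1
  have SqB : ∀ i j, i < n → j < n → col i j = true → SqIn G n i j B :=
    fun i j hi hj => (hcol i j hi hj).2
  -- the four edges of a square lie in the square
  have sq_bot : ∀ i j (c : Set ℂ), SqIn G n i j c → HEdgeIn G n i j c :=
    fun i j c h x hx1 hx2 => h x hx1 hx2 _ (le_refl _) (hstep j)
  have sq_top : ∀ i j (c : Set ℂ), SqIn G n i j c → HEdgeIn G n i (j+1) c := by
    intro i j c h x hx1 hx2
    have := h x hx1 hx2 (((j:ℝ)+1)/n) (hstep j) (le_refl _)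
    simpa [HEdgeIn, hcast j] using this
  have sq_left : ∀ i j (c : Set ℂ), SqIn G n i j c → VEdgeIn G n i j c :=
    fun i j c h y hy1 hy2 => h _ (le_refl _) (hstep i) y hy1 hy2
  have sq_right : ∀ i j (c : Set ℂ), SqIn G n i j c → VEdgeIn G n (i+1) j c := by
    intro i j c h y hy1 hy2
    have := h (((i:ℝ)+1)/n) (hstep i) (le_refl _) y hy1 hy2
    simpa [VEdgeIn, hcast i] using this
  -- boundary vertices
  have hdivmem : ∀ k : ℕ, k ≤ n → (k:ℝ)/n ∈ Set.Icc (0:ℝ) 1 := by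
    intro k hk
    constructor
    · positivity
    · rw [div_le_one hnR]; exact_mod_cast hk
  have hvleft : ∀ j : ℕ, j ≤ n → vtx G n 0 j = p := by
    intro j hj
    have h0 : ((0:ℕ):ℝ)/n = 0 := by norm_num
    rw [vtx, h0]
    exact hleft _ (hdivmem j hj)
  have hvright : ∀ j : ℕ, j ≤ n → vtx G n n j = p := by
    intro j hj
    have h1 : ((n:ℕ):ℝ)/n = 1 := div_self hnne
    rw [vtx, h1]
    exact hright _ (hdivmem j hj)
  have hvtop : ∀ i : ℕ, i ≤ n → vtx G n i n = p := by
    intro i hi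
    have h1 : ((n:ℕ):ℝ)/n = 1 := div_self hnne
    rw [vtx, h1]
    exact htop _ (hdivmem i hi)
  have hdvzero_left : ∀ j, j < n → ∀ c, dV Q G n 0 j c = 0 := by
    intro j hj c
    cases c
    · simp [dV]
    · simp only [dV, if_true]
      rw [hvleft j (le_of_lt hj), hvleft (j+1) hj, z2_add_self]
  have hdvzero_right : ∀ j, j < n → ∀ c, dV Q G n n j c = 0 := by
    intro j hj c
    cases c
    · simp [dV]
    · simp only [dV, if_true]
      rw [hvright j (le_of_lt hj), hvright (j+1) hj, z2_add_self]
  -- row relation: the weight of a row of horizontal edges is preserved moving up one row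
  have rowsum : ∀ j, j < n →
      (∑ i ∈ Finset.range n, dH Q G n i (j+1) (col i j))
        = ∑ i ∈ Finset.range n, dH Q G n i j (col i j) := by
    intro j hj
    have hsq : ∀ i, dH Q G n i (j+1) (col i j)
        = dH Q G n i j (col i j) + (dV Q G n i j (col i j) + dV Q G n (i+1) j (col i j)) := by
      intro i
      cases hc : col i j
      · simp [dH, dV]
      · simp only [dH, dV, if_true]
        have : ∀ a b a' b' : ZMod 2, a' + b' = a + b + (a + a' + (b + b')) := by decide
        exact this _ _ _ _
    rw [Finset.sum_congr rfl (fun i _ => hsq i), Finset.sum_add_distrib]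
    have htel : (∑ i ∈ Finset.range n, (dV Q G n i j (col i j) + dV Q G n (i+1) j (col i j))) = 0 := by
      set h : ℕ → ZMod 2 :=
        fun i => if i < n then dV Q G n i j (col i j) else dV Q G n n j (col (n-1) j) with hh
      have h1 : ∀ i ∈ Finset.range n,
          dV Q G n i j (col i j) + dV Q G n (i+1) j (col i j) = h i + h (i+1) := by
        intro i hi
        rw [Finset.mem_range] at hi
        have e1 : dV Q G n i j (col i j) = h i := by simp [hh, hi]
        have e2' : dV Q G n (i+1) j (col i j) = h (i+1) := by
          by_cases hin : i + 1 < n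
          · simp only [hh, if_pos hin]
            by_cases hcc : col i j = col (i+1) j
            · rw [hcc]
            · have hAB : VEdgeIn G n (i+1) j A ∧ VEdgeIn G n (i+1) j B := by
                cases hc1 : col i j
                · cases hc2 : col (i+1) j
                  · exact absurd (hc1.trans hc2.symm) hcc
                  · exact ⟨sq_right i j A (SqA i j hi hj hc1),
                      sq_left (i+1) j B (SqB (i+1) j hin hj hc2)⟩
                · cases hc2 : col (i+1) j
                  · exact ⟨sq_left (i+1) j A (SqA (i+1) j hin hj hc2),
                      sq_right i j B (SqB i j hi hj hc1)⟩
                  · exact absurd (hc1.trans hc2.symm) hcc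
              rw [dv0 (i+1) j hAB.1 hAB.2, dv0 (i+1) j hAB.1 hAB.2]
          · have hin' : i + 1 = n := by omega
            have hi' : n - 1 = i := by omega
            simp only [hh, if_neg (by omega : ¬ i + 1 < n), hi', hin']
            rw [if_neg (lt_irrefl n)]
        rw [e1, e2']
      rw [Finset.sum_congr rfl h1, z2_tel]
      have hz0 : h 0 = 0 := by
        simp only [hh, if_pos hn]
        exact hdvzero_left j hj _
      have hzn : h n = 0 := by
        simp only [hh, if_neg (lt_irrefl n)]
        exact hdvzero_right j hj _
      rw [hz0, hzn, add_zero]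
    rw [htel, add_zero]
  -- changing the colors of a row of horizontal edges to the row above
  have rowcol : ∀ j, j + 1 < n →
      (∑ i ∈ Finset.range n, dH Q G n i (j+1) (col i (j+1)))
        = ∑ i ∈ Finset.range n, dH Q G n i (j+1) (col i j) := by
    intro j hj
    apply Finset.sum_congr rfl
    intro i hi
    rw [Finset.mem_range] at hi
    by_cases hcc : col i (j+1) = col i j
    · rw [hcc]
    · have hAB : HEdgeIn G n i (j+1) A ∧ HEdgeIn G n i (j+1) B := by
        cases hc1 : col i j
        · cases hc2 : col i (j+1)
          · exact absurd (hc2.trans hc1.symm) hcc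
          · exact ⟨sq_top i j A (SqA i j hi (by omega) hc1),
              sq_bot i (j+1) B (SqB i (j+1) hi hj hc2)⟩
        · cases hc2 : col i (j+1)
          · exact ⟨sq_bot i (j+1) A (SqA i (j+1) hi hj hc2),
              sq_top i j B (SqB i j hi (by omega) hc1)⟩
          · exact absurd (hc2.trans hc1.symm) hcc
      rw [dh0 i (j+1) hAB.1 hAB.2, dh0 i (j+1) hAB.1 hAB.2]
  -- the bottom row has weight 1
  have hmn : m ≤ n := by omega
  have hhalf : ((m:ℕ):ℝ)/n = 1/2 := by
    rw [hnm]
    push_cast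
    rw [div_eq_div_iff (by positivity) (by norm_num)]
    ring
  have hbottom : (∑ i ∈ Finset.range n, dH Q G n i 0 (col i 0)) = 1 := by
    rw [Finset.range_eq_Ico, ← Finset.sum_Ico_consecutive _ (Nat.zero_le m) hmn]
    have h0n : ((0:ℕ):ℝ)/n = 0 := by norm_num
    have hA0 : ∀ i ∈ Finset.Ico 0 m, dH Q G n i 0 (col i 0) = 0 := by
      intro i hi
      rw [Finset.mem_Ico] at hi
      have hi' : i < n := by omega
      have heA : HEdgeIn G n i 0 A := by
        intro x hx1 hx2
        rw [h0n]
        apply hbotA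
        constructor
        · exact le_trans (by positivity) hx1
        · refine le_trans hx2 (le_trans ?_ (le_of_eq hhalf))
          apply div_le_div_of_nonneg_right ?_ hnR.le
          have : (i:ℝ) + 1 ≤ (m:ℝ) := by exact_mod_cast hi.2
          linarith
      cases hc : col i 0
      · simp [dH]
      · exact dh0 i 0 heA (sq_bot i 0 B (SqB i 0 hi' hn hc)) _
    have hB0 : ∀ i ∈ Finset.Ico m n,
        dH Q G n i 0 (col i 0) = eps2 Q (vtx G n i 0) + eps2 Q (vtx G n (i+1) 0) := by
      intro i hi
      rw [Finset.mem_Ico] at hi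
      have heB : HEdgeIn G n i 0 B := by
        intro x hx1 hx2
        rw [h0n]
        apply hbotB
        constructor
        · refine le_trans (le_of_eq hhalf.symm) (le_trans ?_ hx1)
          apply div_le_div_of_nonneg_right ?_ hnR.le
          exact_mod_cast hi.1
        · refine le_trans hx2 ?_
          rw [div_le_one hnR]
          have : (i:ℝ) + 1 ≤ (n:ℝ) := by exact_mod_cast hi.2
          linarith
      cases hc : col i 0
      · have heA := sq_bot i 0 A (SqA i 0 hi.2 hn hc)
        rw [← hepsH i 0 heA heB, z2_add_self]
        simp [dH]
      · simp [dH]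
    rw [Finset.sum_congr rfl hA0, Finset.sum_congr rfl hB0, Finset.sum_const_zero, zero_add]
    rw [z2_telIco (fun k => eps2 Q (vtx G n k 0)) m n hmn]
    have hvm : vtx G n m 0 = q := by
      rw [vtx, h0n, hhalf]
      exact hmid
    have hvn : vtx G n n 0 = p := by
      rw [vtx, h0n, div_self hnne]
      exact hright 0 ⟨le_refl _, by norm_num⟩
    rw [hvm, hvn, heq, hep, add_zero]
  -- induction up the rows
  have main : ∀ j, j < n → (∑ i ∈ Finset.range n, dH Q G n i j (col i j)) = 1 := by
    intro j
    induction j with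
    | zero => intro _; exact hbottom
    | succ j ih =>
      intro hj
      have hj' : j < n := by omega
      rw [rowcol j hj, rowsum j hj', ih hj']
  -- but the top row has weight 0
  have htoprow : (∑ i ∈ Finset.range n, dH Q G n i ((n-1)+1) (col i (n-1))) = 0 := by
    apply Finset.sum_eq_zero
    intro i hi
    rw [Finset.mem_range] at hi
    have hnn : (n-1)+1 = n := by omega
    cases hc : col i (n-1)
    · simp [dH]
    · simp only [dH, if_true, hnn]
      rw [hvtop i (le_of_lt hi), hvtop (i+1) hi, z2_add_self]
  have hfin : (0 : ZMod 2) = 1 := by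
    rw [← htoprow, rowsum (n-1) (by omega), main (n-1) (by omega)]
  exact absurd hfin (by decide)

/- STATEMENT 17: if U ⊆ ℂ is open and simply connected and X ⊆ U is a full
compact set (i.e. ℂ \ X is connected), then U \ X is connected. -/
theorem diff_full_compact_connected
    (U : Set ℂ) (hU : IsOpen U) (hsc : SimplyConnectedSpace ↥U)
    (X : Set ℂ) (hX : IsCompact X) (hXU : X ⊆ U)
    (hfull : IsConnected Xᶜ) :
    IsConnected (U \ X) := by
  classical
  have hXcl : IsClosed X := hX.isClosed
  have hBo : IsOpen Xᶜ := hXcl.isOpen_compl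
  have hUXopen : IsOpen (U \ X) := hU.sdiff hXcl
  have hpcU : PathConnectedSpace ↥U := inferInstance
  -- `U \ X` is nonempty
  have hne : (U \ X).Nonempty := by
    by_contra h
    rw [Set.not_nonempty_iff_eq_empty, Set.diff_eq_empty] at h
    have hUX : U = X := Set.Subset.antisymm h hXU
    have hnU : Nonempty ↥U := hpcU.nonempty
    obtain ⟨⟨z, hz⟩⟩ := hnU
    have hclopen : IsClopen U := ⟨hUX ▸ hXcl, hU⟩
    have huniv : U = Set.univ := hclopen.eq_univ ⟨z, hz⟩
    have hcu : IsCompact (Set.univ : Set ℂ) := by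
      rw [← huniv, hUX]; exact hX
    exact (not_compactSpace_iff.mpr inferInstance) (isCompact_univ_iff.mp hcu)
  constructor
  · exact hne
  -- suppose `U \ X` is not preconnected; get a separation `P, Q`
  by_contra hpc
  rw [IsPreconnected] at hpc
  push_neg at hpc
  obtain ⟨u, v, hu, hv, hsub, hu1, hv1, hemp⟩ := hpc
  set P : Set ℂ := (U \ X) ∩ u with hPdef
  set Q : Set ℂ := (U \ X) ∩ v with hQdef
  have hPo : IsOpen P := hUXopen.inter hu
  have hQo : IsOpen Q := hUXopen.inter hv
  have hPQ : U ∩ Xᶜ = P ∪ Q := by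
    have hdx : U ∩ Xᶜ = U \ X := (Set.diff_eq U X).symm
    rw [hdx, hPdef, hQdef, ← Set.inter_union_distrib_left]
    exact (Set.inter_eq_left.mpr hsub).symm
  have hdisjPQ : ∀ z, z ∈ P → z ∈ Q → False := by
    intro z hzP hzQ
    exact Set.eq_empty_iff_forall_notMem.mp hemp z ⟨hzP.1, hzP.2, hzQ.2⟩
  obtain ⟨p, hpP⟩ := hu1
  obtain ⟨q, hqQ⟩ := hv1
  -- paths: `α` from `p` to `q` inside `U`, `β` from `q` back to `p` inside `Xᶜ`
  have hUpath : IsPathConnected U := by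
    rw [isPathConnected_iff_pathConnectedSpace]; exact hpcU
  have hXcpath : IsPathConnected Xᶜ := hBo.isConnected_iff_isPathConnected.mp hfull
  have hpU : p ∈ U := hpP.1.1
  have hqU : q ∈ U := hqQ.1.1
  have hpXc : p ∈ Xᶜ := hpP.1.2
  have hqXc : q ∈ Xᶜ := hqQ.1.2
  obtain ⟨α, hα⟩ := hUpath.joinedIn p hpU q hqU
  obtain ⟨β, hβ⟩ := hXcpath.joinedIn q hqXc p hpXc
  -- the loop `α.trans β` is null-homotopic in `ℂ`
  obtain ⟨H⟩ : Path.Homotopic (α.trans β) (Path.refl p) :=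
    SimplyConnectedSpace.paths_homotopic (α.trans β) (Path.refl p)
  set pr : ℝ → unitInterval := Set.projIcc 0 1 zero_le_one with hpr
  have hprmem : ∀ (x : ℝ) (hx : x ∈ Set.Icc (0:ℝ) 1), pr x = ⟨x, hx⟩ :=
    fun x hx => Set.projIcc_of_mem zero_le_one hx
  have hpr0 : pr 0 = 0 := hprmem 0 ⟨le_refl 0, zero_le_one⟩
  have hpr1 : pr 1 = 1 := hprmem 1 ⟨zero_le_one, le_refl 1⟩
  set G : ℝ → ℝ → ℂ := fun x y => H (pr y, pr x) with hG
  have hGc : Continuous fun w : ℝ × ℝ => G w.1 w.2 := by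
    apply H.continuous.comp
    exact (continuous_projIcc.comp continuous_snd).prodMk (continuous_projIcc.comp continuous_fst)
  have hGx0 : ∀ x : ℝ, x ∈ Set.Icc (0:ℝ) 1 → G x 0 = (α.trans β) (pr x) := by
    intro x hx
    simp only [hG]
    rw [hpr0]
    exact H.apply_zero (pr x)
  have hleft : ∀ y ∈ Set.Icc (0:ℝ) 1, G 0 y = p := by
    intro y hy
    simp only [hG]
    rw [hpr0]
    rw [ContinuousMap.HomotopyRel.eq_fst H (pr y) (Set.mem_insert 0 {1})]
    exact (α.trans β).source
  have hright : ∀ y ∈ Set.Icc (0:ℝ) 1, G 1 y = p := by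
    intro y hy
    simp only [hG]
    rw [hpr1]
    rw [ContinuousMap.HomotopyRel.eq_fst H (pr y)
      (Set.mem_insert_iff.mpr (Or.inr (Set.mem_singleton 1)))]
    exact (α.trans β).target
  have htop : ∀ x ∈ Set.Icc (0:ℝ) 1, G x 1 = p := by
    intro x hx
    simp only [hG]
    rw [hpr1]
    rw [H.apply_one (pr x)]
    rfl
  have hbotA : ∀ x ∈ Set.Icc (0:ℝ) (1/2), G x 0 ∈ U := by
    intro x hx
    have hx1 : x ∈ Set.Icc (0:ℝ) 1 := ⟨hx.1, le_trans hx.2 (by norm_num)⟩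
    rw [hGx0 x hx1, hprmem x hx1, Path.trans_apply, dif_pos hx.2]
    exact hα _
  have hbotB : ∀ x ∈ Set.Icc (1/2:ℝ) 1, G x 0 ∈ Xᶜ := by
    intro x hx
    have hx1 : x ∈ Set.Icc (0:ℝ) 1 := ⟨le_trans (by norm_num) hx.1, hx.2⟩
    rw [hGx0 x hx1, hprmem x hx1, Path.trans_apply]
    by_cases hle : x ≤ 1/2
    · rw [dif_pos hle]
      have hxe : x = 1/2 := le_antisymm hle hx.1
      have hval : ∀ t : unitInterval, t = 1 → α t ∈ Xᶜ := by
        intro t ht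
        rw [ht, α.target]
        exact hqXc
      apply hval
      exact Subtype.ext (by simp [hxe])
    · rw [dif_neg hle]
      exact hβ _
  have hmid : G (1/2:ℝ) 0 = q := by
    have hx1 : (1/2:ℝ) ∈ Set.Icc (0:ℝ) 1 := by norm_num
    rw [hGx0 _ hx1, hprmem _ hx1, Path.trans_apply, dif_pos (le_refl _)]
    have hval : ∀ t : unitInterval, t = 1 → α t = q := by
      intro t ht; rw [ht]; exact α.target
    apply hval
    exact Subtype.ext (by norm_num)
    -- Lebesgue number for the cover {U, Xᶜ} of the image of the homotopy square
  have hopens : ∀ b : Bool, IsOpen ((fun w : ℝ × ℝ => G w.1 w.2) ⁻¹' (if b then Xᶜ else U)) := by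
    intro b
    cases b
    · simpa using hU.preimage hGc
    · simpa using hBo.preimage hGc
  have hcover : Set.Icc (0:ℝ) 1 ×ˢ Set.Icc (0:ℝ) 1 ⊆
      ⋃ b : Bool, (fun w : ℝ × ℝ => G w.1 w.2) ⁻¹' (if b then Xᶜ else U) := by
    intro w _
    by_cases hw : G w.1 w.2 ∈ X
    · exact Set.mem_iUnion.mpr ⟨false, by simpa using hXU hw⟩
    · exact Set.mem_iUnion.mpr ⟨true, by simpa using hw⟩
  obtain ⟨δ, hδ, hball⟩ := lebesgue_number_lemma_of_metric
    (isCompact_Icc.prod isCompact_Icc) hopens hcover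
  set m : ℕ := ⌈1/δ⌉₊ + 1 with hmdef
  have hmpos : 0 < m := Nat.succ_pos _
  set n : ℕ := 2 * m with hndef
  have hnpos : 0 < n := by omega
  have hnR : (0:ℝ) < n := by exact_mod_cast hnpos
  have hnδ : 1/(n:ℝ) < δ := by
    have h1 : (1:ℝ)/δ < m := by
      calc (1:ℝ)/δ ≤ (⌈1/δ⌉₊ : ℝ) := Nat.le_ceil _
        _ < m := by rw [hmdef]; push_cast; linarith
    have h2 : (1:ℝ)/δ < n := by
      refine lt_of_lt_of_le h1 ?_
      rw [hndef]; push_cast; linarith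
    have h3 : 1 < (n:ℝ) * δ := by
      have := (div_lt_iff₀ hδ).mp h2
      linarith
    rw [div_lt_iff₀ hnR]
    linarith [mul_comm (n:ℝ) δ]
  have hLeb : ∀ i j : ℕ, i < n → j < n → SqIn G n i j U ∨ SqIn G n i j Xᶜ := by
    intro i j hi hj
    have hcorner : (((i:ℝ)/n, (j:ℝ)/n) : ℝ × ℝ) ∈ Set.Icc (0:ℝ) 1 ×ˢ Set.Icc (0:ℝ) 1 := by
      constructor
      · constructor
        · positivity
        · rw [div_le_one hnR]; exact_mod_cast le_of_lt hi
      · constructor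
        · positivity
        · rw [div_le_one hnR]; exact_mod_cast le_of_lt hj
    obtain ⟨b, hb⟩ := hball _ hcorner
    have hsq : ∀ x : ℝ, (i:ℝ)/n ≤ x → x ≤ ((i:ℝ)+1)/n → ∀ y : ℝ, (j:ℝ)/n ≤ y → y ≤ ((j:ℝ)+1)/n →
        G x y ∈ (if b then Xᶜ else U) := by
      intro x hx1 hx2 y hy1 hy2
      have hgap : ∀ a : ℝ, ((a:ℝ)+1)/n - a/n = 1/n := by
        intro a
        rw [div_sub_div_same]
        ring_nf
      have hd1 : dist x ((i:ℝ)/n) < δ := by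
        rw [Real.dist_eq, abs_sub_lt_iff]
        constructor
        · have := hgap (i:ℝ)
          linarith
        · linarith
      have hd2 : dist y ((j:ℝ)/n) < δ := by
        rw [Real.dist_eq, abs_sub_lt_iff]
        constructor
        · have := hgap (j:ℝ)
          linarith
        · linarith
      have hmem : ((x, y) : ℝ × ℝ) ∈ Metric.ball (((i:ℝ)/n, (j:ℝ)/n) : ℝ × ℝ) δ := by
        rw [Metric.mem_ball, Prod.dist_eq]
        exact max_lt hd1 hd2
      simpa using hb hmem
    cases b
    · left
      intro x hx1 hx2 y hy1 hy2
      simpa using hsq x hx1 hx2 y hy1 hy2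
    · right
      intro x hx1 hx2 y hy1 hy2
      simpa using hsq x hx1 hx2 y hy1 hy2
  exact grid_false U Xᶜ P Q hPo hQo hPQ hdisjPQ p q hpP hqQ n m hmpos hndef G hGc
    hleft hright htop hbotA hbotB hmid hLeb
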